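/- Let f, s, ŷ ∈ ℝ^n have positive sample standard deviations. Suppose ρ(f, s) ≥ cos α for some α ∈ [0, π/2), and |ρ(f, ŷ)| ≤ sin δ for some δ ∈ [0, π/2) (i.e., the angle between standardized f and ŷ lies in [π/2 − δ, π/2 + δ]). Then |ρ(s, ŷ)| ≤ sin(δ + α), provided δ + α ≤ π/2. -/

import Mathlib

/-!
Centring the samples turns `ρ` into the cosine of the angle between the centred vectors in `ℝⁿ`.
With `θ₁ = ∠(f, s) ≤ α` and `|∠(f, ŷ) - π/2| ≤ δ`, the triangle inequality for angles gives
`|∠(s, ŷ) - π/2| ≤ δ + α ≤ π/2`, and `|cos θ| = |sin (π/2 - θ)|` is monotone in `|θ - π/2|` there.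
-/

noncomputable def mean {n : ℕ} (x : Fin n → ℝ) : ℝ := (∑ i, x i) / n

noncomputable def std {n : ℕ} (x : Fin n → ℝ) : ℝ :=
  Real.sqrt ((∑ i, (x i - mean x) ^ 2) / n)

noncomputable def pearson {n : ℕ} (x y : Fin n → ℝ) : ℝ :=
  ((∑ i, (x i - mean x) * (y i - mean y)) / n) / (std x * std y)

open Real InnerProductGeometry

noncomputable def centered {n : ℕ} (x : Fin n → ℝ) : EuclideanSpace ℝ (Fin n) :=
  WithLp.toLp 2 fun i => x i - mean x

lemma inner_centered {n : ℕ} (x y : Fin n → ℝ) :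
    inner ℝ (centered x) (centered y) = ∑ i, (x i - mean x) * (y i - mean y) := by
  simp [centered, PiLp.inner_apply, mul_comm]

lemma std_eq_norm_centered_div {n : ℕ} (x : Fin n → ℝ) : std x = ‖centered x‖ / √n := by
  rw [std, sqrt_div' _ n.cast_nonneg, EuclideanSpace.norm_eq]
  simp [centered]

/-- For a constant sample `std = 0`, and both sides are the junk value `0`
(`cos (π / 2)` on the right). -/
lemma pearson_eq_cos_angle {n : ℕ} (x y : Fin n → ℝ) :
    pearson x y = cos (angle (centered x) (centered y)) := by
  rw [cos_angle, pearson, std_eq_norm_centered_div, std_eq_norm_centered_div, inner_centered,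
    div_mul_div_comm, mul_self_sqrt n.cast_nonneg]
  rcases n.eq_zero_or_pos with rfl | hn
  · simp
  · exact div_div_div_cancel_right₀ (by positivity) _ _

lemma abs_sin_le_sin_iff {t δ : ℝ} (ht : |t| ≤ π / 2) (hδ : δ ∈ Set.Icc (-(π / 2)) (π / 2)) :
    |sin t| ≤ sin δ ↔ |t| ≤ δ := by
  rw [abs_sin_eq_sin_abs_of_abs_le_pi (ht.trans (by linarith [pi_pos]))]
  exact strictMonoOn_sin.le_iff_le ⟨by linarith [abs_nonneg t, pi_pos], ht⟩ hδ

lemma abs_cos_le_sin_iff {θ δ : ℝ} (hθ : θ ∈ Set.Icc 0 π) (hδ : δ ∈ Set.Icc (-(π / 2)) (π / 2)) :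
    |cos θ| ≤ sin δ ↔ |θ - π / 2| ≤ δ := by
  rw [← sin_pi_div_two_sub, abs_sub_comm θ]
  exact abs_sin_le_sin_iff (abs_le.2 ⟨by linarith [hθ.2], by linarith [hθ.1]⟩) hδ

lemma abs_angle_sub_pi_div_two_le {V : Type*} [NormedAddCommGroup V] [InnerProductSpace ℝ V]
    {u v w : V} {α δ : ℝ} (huv : angle u v ≤ α) (huw : |angle u w - π / 2| ≤ δ) :
    |angle v w - π / 2| ≤ δ + α := by
  have h₁ := angle_le_angle_add_angle u v w
  have h₂ := angle_le_angle_add_angle v u w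
  rw [angle_comm v u] at h₂
  rw [abs_le] at huw ⊢
  constructor <;> linarith

theorem stmt_5_general {n : ℕ} (f s yhat : Fin n → ℝ)
    (α δ : ℝ) (hα : α ∈ Set.Ico 0 (Real.pi / 2)) (hδ : δ ∈ Set.Ico 0 (Real.pi / 2))
    (h1 : Real.cos α ≤ pearson f s)
    (h2 : |pearson f yhat| ≤ Real.sin δ)
    (hsum : δ + α ≤ Real.pi / 2) :
    |pearson s yhat| ≤ Real.sin (δ + α) := by
  rw [pearson_eq_cos_angle] at h1 h2 ⊢
  have angle_mem (x y : EuclideanSpace ℝ (Fin n)) : angle x y ∈ Set.Icc 0 π :=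
    ⟨angle_nonneg x y, angle_le_pi x y⟩
  have hfs : angle (centered f) (centered s) ≤ α :=
    (strictAntiOn_cos.le_iff_ge ⟨hα.1, by linarith [hα.2, pi_pos]⟩ (angle_mem _ _)).1 h1
  have hfy : |angle (centered f) (centered yhat) - π / 2| ≤ δ :=
    (abs_cos_le_sin_iff (angle_mem _ _) ⟨by linarith [hδ.1, pi_pos], hδ.2.le⟩).1 h2
  exact (abs_cos_le_sin_iff (angle_mem _ _) ⟨by linarith [hδ.1, hα.1, pi_pos], hsum⟩).2
    (abs_angle_sub_pi_div_two_le hfs hfy)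

theorem stmt_5 {n : ℕ} (f s yhat : Fin n → ℝ)
    (hf : 0 < std f) (hs : 0 < std s) (hy : 0 < std yhat)
    (α δ : ℝ) (hα : α ∈ Set.Ico 0 (Real.pi / 2)) (hδ : δ ∈ Set.Ico 0 (Real.pi / 2))
    (h1 : Real.cos α ≤ pearson f s)
    (h2 : |pearson f yhat| ≤ Real.sin δ)
    (hsum : δ + α ≤ Real.pi / 2) :
    |pearson s yhat| ≤ Real.sin (δ + α) :=
  stmt_5_general f s yhat α δ hα hδ h1 h2 hsum
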